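/- Let ℓ ∈ ℂ. For a function ṽ : ℝ → ℂ the following are equivalent: (i) there exists a smooth, even, homogeneous-of-degree-2ℓ function v : ℝ²∖{0} → ℂ with ṽ(x) = v(x, 1) for all x ∈ ℝ; (ii) ṽ is smooth, and there exists a smooth function h : ℝ → ℂ such that h(x) = |x|^{2ℓ}·ṽ(1/x) for all x ≠ 0, where |x|^{2ℓ} := exp(2ℓ·log|x|). -/
import Mathlib


/-- `v : ℝ² \ {0} → ℂ` (modelled as `v : ℝ × ℝ → ℂ`, with all conditions imposed away
from the origin) is smooth, even and homogeneous of degree `2ℓ`. -/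
def IsSmoothEvenHom (ℓ : ℂ) (v : ℝ × ℝ → ℂ) : Prop :=
  ContDiffOn ℝ (⊤ : ℕ∞) v {x : ℝ × ℝ | x ≠ 0} ∧
  (∀ x : ℝ × ℝ, x ≠ 0 → v (-x) = v x) ∧
  (∀ τ : ℝ, 0 < τ → ∀ x : ℝ × ℝ, x ≠ 0 → v (τ • x) = Complex.exp (2 * ℓ * Real.log τ) * v x)

lemma aux_smooth_snd (ℓ : ℂ) (f : ℝ → ℂ) (hf : ContDiff ℝ (⊤ : ℕ∞) f) :
    ContDiffOn ℝ (⊤ : ℕ∞) (fun x : ℝ × ℝ => Complex.exp (2 * ℓ * Real.log x.2) * f (x.1 / x.2))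
      {x : ℝ × ℝ | x.2 ≠ 0} := by
  apply ContDiffOn.mul
  · apply (Complex.contDiff_exp.comp_contDiffOn (s := {x : ℝ × ℝ | x.2 ≠ 0})
      (f := fun x : ℝ × ℝ => 2 * ℓ * (Real.log x.2 : ℂ)))
    apply ContDiffOn.mul contDiffOn_const
    exact Complex.ofRealCLM.contDiff.comp_contDiffOn
      (Real.contDiffOn_log.comp contDiff_snd.contDiffOn (fun x hx => hx))
  · exact hf.comp_contDiffOn
      (contDiff_fst.contDiffOn.div contDiff_snd.contDiffOn (fun x hx => hx))

lemma aux_smooth_fst (ℓ : ℂ) (f : ℝ → ℂ) (hf : ContDiff ℝ (⊤ : ℕ∞) f) :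
    ContDiffOn ℝ (⊤ : ℕ∞) (fun x : ℝ × ℝ => Complex.exp (2 * ℓ * Real.log x.1) * f (x.2 / x.1))
      {x : ℝ × ℝ | x.1 ≠ 0} := by
  apply ContDiffOn.mul
  · apply (Complex.contDiff_exp.comp_contDiffOn (s := {x : ℝ × ℝ | x.1 ≠ 0})
      (f := fun x : ℝ × ℝ => 2 * ℓ * (Real.log x.1 : ℂ)))
    apply ContDiffOn.mul contDiffOn_const
    exact Complex.ofRealCLM.contDiff.comp_contDiffOn
      (Real.contDiffOn_log.comp contDiff_fst.contDiffOn (fun x hx => hx))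
  · exact hf.comp_contDiffOn
      (contDiff_snd.contDiffOn.div contDiff_fst.contDiffOn (fun x hx => hx))

/-- a function `ṽ : ℝ → ℂ` is the line realisation `ṽ(x) = v(x,1)` of some
smooth even homogeneous-of-degree-`2ℓ` function `v` on `ℝ² \ {0}` if and only if `ṽ` is
smooth and `x ↦ |x|^{2ℓ}·ṽ(1/x)` (for `x ≠ 0`) extends to a smooth function on `ℝ`. -/
theorem stmt14 (ℓ : ℂ) (vt : ℝ → ℂ) :
    (∃ v : ℝ × ℝ → ℂ, IsSmoothEvenHom ℓ v ∧ ∀ x : ℝ, vt x = v (x, 1)) ↔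
    (ContDiff ℝ (⊤ : ℕ∞) vt ∧ ∃ h : ℝ → ℂ, ContDiff ℝ (⊤ : ℕ∞) h ∧
      ∀ x : ℝ, x ≠ 0 → h x = Complex.exp (2 * ℓ * Real.log |x|) * vt (1 / x)) := by
  constructor
  · rintro ⟨v, ⟨hsm, hev, hhom⟩, hline⟩
    have hne : ∀ x : ℝ, ((x, (1:ℝ)) : ℝ × ℝ) ≠ 0 := by
      intro x hx
      simpa using congrArg Prod.snd hx
    have hne' : ∀ x : ℝ, (((1:ℝ), x) : ℝ × ℝ) ≠ 0 := by
      intro x hx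
      simpa using congrArg Prod.fst hx
    constructor
    · rw [contDiff_iff_contDiffAt]
      intro x
      have h1 : ContDiffAt ℝ (⊤ : ℕ∞) v (x, 1) :=
        hsm.contDiffAt (IsOpen.mem_nhds (isOpen_compl_singleton) (hne x))
      have h2 : ContDiff ℝ (⊤ : ℕ∞) (fun t : ℝ => ((t, (1:ℝ)) : ℝ × ℝ)) :=
        contDiff_id.prodMk contDiff_const
      have := h1.comp x (h2.contDiffAt)
      exact this.congr_of_eventuallyEq (Filter.Eventually.of_forall (fun t => hline t))
    · refine ⟨fun t => v (1, t), ?_, ?_⟩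
      · rw [contDiff_iff_contDiffAt]
        intro x
        have h1 : ContDiffAt ℝ (⊤ : ℕ∞) v (1, x) :=
          hsm.contDiffAt (IsOpen.mem_nhds (isOpen_compl_singleton) (hne' x))
        exact h1.comp x ((contDiff_const.prodMk contDiff_id).contDiffAt)
      · intro x hx
        rw [hline (1/x)]
        rcases hx.lt_or_gt with hlt | hlt
        · have hτ : (0:ℝ) < -x := by linarith
          have := hhom (-x) hτ ((1/x, 1)) (hne _)
          have hs : (-x) • ((1/x, (1:ℝ)) : ℝ × ℝ) = (-1, -x) := by
            simp [Prod.smul_mk, smul_eq_mul]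
            field_simp
          rw [hs] at this
          have he : v (-1, -x) = v (1, x) := by
            have := hev (1, x) (hne' x)
            simpa using this
          rw [he] at this
          show v (1, x) = _
          rw [this, abs_of_neg hlt]
        · have := hhom x hlt ((1/x, 1)) (hne _)
          have hs : x • ((1/x, (1:ℝ)) : ℝ × ℝ) = (1, x) := by
            simp [Prod.smul_mk, smul_eq_mul]
            field_simp
          rw [hs] at this
          show v (1, x) = _
          rw [this, abs_of_pos hlt]
  · rintro ⟨hvt, h, hh, hrel⟩
    set v : ℝ × ℝ → ℂ := fun x =>
      if x.2 ≠ 0 then Complex.exp (2 * ℓ * Real.log x.2) * vt (x.1 / x.2)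
      else Complex.exp (2 * ℓ * Real.log x.1) * h 0 with hv
    -- on {x.1 ≠ 0}, v agrees with the "h"-side formula
    have key : ∀ x : ℝ × ℝ, x.1 ≠ 0 →
        v x = Complex.exp (2 * ℓ * Real.log x.1) * h (x.2 / x.1) := by
      rintro ⟨a, b⟩ (ha : a ≠ 0)
      by_cases hb : b ≠ 0
      · have hba : b / a ≠ 0 := div_ne_zero hb ha
        rw [hv]
        simp only [ne_eq, hb, not_false_eq_true, if_pos]
        rw [hrel _ hba, one_div_div]
        rw [← mul_assoc, ← Complex.exp_add]
        congr 2
        rw [abs_div, Real.log_div (abs_ne_zero.2 hb) (abs_ne_zero.2 ha),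
          Real.log_abs, Real.log_abs]
        push_cast
        ring
      · push_neg at hb
        subst hb
        rw [hv]
        simp
    have hsm : ContDiffOn ℝ (⊤ : ℕ∞) v {x : ℝ × ℝ | x ≠ 0} := by
      intro p hp
      have hp' : p ≠ 0 := hp
      by_cases h2 : p.2 ≠ 0
      · have hopen : {x : ℝ × ℝ | x.2 ≠ 0} ∈ nhds p :=
          IsOpen.mem_nhds (isOpen_ne_fun continuous_snd continuous_const) h2
        have heq : v =ᶠ[nhds p]
            (fun x : ℝ × ℝ => Complex.exp (2 * ℓ * Real.log x.2) * vt (x.1 / x.2)) :=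
          Filter.eventuallyEq_of_mem hopen (fun x hx => by
            simp only [hv]; exact if_pos hx)
        exact (((aux_smooth_snd ℓ vt hvt).contDiffAt hopen).congr_of_eventuallyEq
          heq).contDiffWithinAt
      · push_neg at h2
        have h1 : p.1 ≠ 0 := by
          intro h1
          exact hp' (Prod.ext h1 h2)
        have hopen : {x : ℝ × ℝ | x.1 ≠ 0} ∈ nhds p :=
          IsOpen.mem_nhds (isOpen_ne_fun continuous_fst continuous_const) h1
        have heq : v =ᶠ[nhds p]
            (fun x : ℝ × ℝ => Complex.exp (2 * ℓ * Real.log x.1) * h (x.2 / x.1)) :=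
          Filter.eventuallyEq_of_mem hopen (fun x hx => key x hx)
        exact (((aux_smooth_fst ℓ h hh).contDiffAt hopen).congr_of_eventuallyEq
          heq).contDiffWithinAt
    refine ⟨v, ⟨hsm, ?_, ?_⟩, ?_⟩
    · rintro ⟨a, b⟩ -
      by_cases hb : b ≠ 0
      · have : -b ≠ 0 := neg_ne_zero.2 hb
        rw [hv]
        simp only [Prod.neg_mk, ne_eq, hb, this, not_false_eq_true, if_pos,
          neg_div_neg_eq]
        rw [Real.log_neg_eq_log]
      · push_neg at hb
        subst hb
        rw [hv]
        simp [Real.log_neg_eq_log]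
    · rintro τ hτ ⟨a, b⟩ hab
      have hτ0 : τ ≠ 0 := ne_of_gt hτ
      by_cases hb : b ≠ 0
      · have hτb : τ * b ≠ 0 := mul_ne_zero hτ0 hb
        rw [hv]
        simp only [Prod.smul_mk, smul_eq_mul, ne_eq, hτb, hb, not_false_eq_true, if_pos]
        rw [mul_div_mul_left _ _ hτ0, ← mul_assoc, ← Complex.exp_add]
        congr 2
        rw [Real.log_mul hτ0 hb]
        push_cast
        ring
      · push_neg at hb
        subst hb
        have ha : a ≠ 0 := by
          intro ha; exact hab (Prod.ext ha rfl)
        have hτa : τ * a ≠ 0 := mul_ne_zero hτ0 ha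
        rw [hv]
        simp only [Prod.smul_mk, smul_eq_mul, mul_zero, ne_eq, not_true_eq_false,
          if_neg, not_false_eq_true]
        rw [← mul_assoc, ← Complex.exp_add]
        congr 2
        rw [Real.log_mul hτ0 ha]
        push_cast
        ring
    · intro x
      rw [hv]
      simp
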